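/- arXiv:1212.3006 — 8 statements merged into one kernel-verified Lean document; each statement's English description precedes it below -/
import Mathlib

section
/- For any (k+1)×(k+1) matrix M over a commutative ring (or a field), the Desnanot–Jacobi identity holds: det(M) · det(M with row 1, row k+1, column 1 and column k+1 deleted) = det(M with row k+1 and column k+1 deleted) · det(M with row 1 and column 1 deleted) − det(M with row 1 and column k+1 deleted) · det(M with row k+1 and column 1 deleted). -/
/-!
Multiplying `M : Matrix (m ⊕ n) (m ⊕ n) R` on the right by the identity matrix with its first
block column replaced by that of `adjugate M` gives a block upper triangular matrix with diagonal
blocks `det M • 1` and `M₂₂`. Hence `det M * det (adjugate M)₁₁ = det M ^ |m| * det M₂₂`, and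
cancelling one factor `det M`, legitimate for the generic matrix over `ℤ[X_ij]`, yields Jacobi's
complementary minor identity. Desnanot–Jacobi is the case where `m` indexes the first and last
row and column, since the entries of `adjugate M` are signed minors of size `n + 1`.
-/

open Matrix

namespace Matrix

variable {m n R : Type*} [Fintype m] [Fintype n] [DecidableEq m] [DecidableEq n] [CommRing R]

theorem mul_fromBlocks_adjugate_toBlocks (M : Matrix (m ⊕ n) (m ⊕ n) R) :
    M * fromBlocks M.adjugate.toBlocks₁₁ 0 M.adjugate.toBlocks₂₁ 1 =
      fromBlocks (M.det • 1) M.toBlocks₁₂ 0 M.toBlocks₂₂ := by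
  have h := M.mul_adjugate
  generalize M.adjugate = A, M.det = d at h ⊢
  rw [← fromBlocks_toBlocks M, ← fromBlocks_toBlocks A, fromBlocks_multiply,
    ← fromBlocks_one, fromBlocks_smul, fromBlocks_inj] at h
  obtain ⟨h₁₁, -, h₂₁, -⟩ := h
  rw [← fromBlocks_toBlocks M, fromBlocks_multiply]
  simp [h₁₁, h₂₁]

theorem det_mul_det_adjugate_toBlocks₁₁ (M : Matrix (m ⊕ n) (m ⊕ n) R) :
    M.det * M.adjugate.toBlocks₁₁.det = M.det ^ Fintype.card m * M.toBlocks₂₂.det := by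
  have h := congrArg det (mul_fromBlocks_adjugate_toBlocks M)
  rwa [det_mul, det_fromBlocks_zero₁₂, det_fromBlocks_zero₂₁, det_one, mul_one, det_smul,
    det_one, mul_one] at h

theorem det_adjugate_toBlocks₁₁ [Nonempty m] (M : Matrix (m ⊕ n) (m ⊕ n) R) :
    M.adjugate.toBlocks₁₁.det = M.det ^ (Fintype.card m - 1) * M.toBlocks₂₂.det := by
  let X := mvPolynomialX (m ⊕ n) (m ⊕ n) ℤ
  suffices hX : X.adjugate.toBlocks₁₁.det = X.det ^ (Fintype.card m - 1) * X.toBlocks₂₂.det by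
    have h := congrArg (MvPolynomial.aeval fun p : (m ⊕ n) × (m ⊕ n) => M p.1 p.2) hX
    rw [map_mul, map_pow, AlgHom.map_det, AlgHom.map_det, AlgHom.map_det] at h
    rw [← mvPolynomialX_mapMatrix_aeval ℤ M, ← AlgHom.map_adjugate]
    exact h
  apply mul_left_cancel₀ (det_mvPolynomialX_ne_zero (m ⊕ n) ℤ)
  rw [det_mul_det_adjugate_toBlocks₁₁, ← mul_assoc, ← pow_succ',
    Nat.sub_add_cancel Fintype.card_pos]

end Matrix

noncomputable def Fin.endsSumInteriorEquiv (n : ℕ) : Fin 2 ⊕ Fin n ≃ Fin (n + 2) :=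
  Equiv.ofBijective (Sum.elim ![0, Fin.last (n + 1)] fun k => k.succ.castSucc) <|
    (Fintype.bijective_iff_injective_and_card _).2
      ⟨Function.Injective.sumElim
        (by intro i j; fin_cases i <;> fin_cases j <;> simp [Fin.ext_iff])
        ((Fin.castSucc_injective _).comp (Fin.succ_injective _))
        (by simpa [Fin.forall_fin_two, Fin.ext_iff] using fun k : Fin n => k.isLt.ne'),
       by simp [add_comm]⟩

/-- Desnanot–Jacobi identity for an (n+2)×(n+2) matrix over a commutative ring.
`M.submatrix i.succAbove j.succAbove` is M with row i and column j deleted;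
rows/columns `0` and `Fin.last` correspond to rows/columns 1 and n+2 in 1-based
indexing, and the inner minor deletes both of them. -/
theorem desnanot_jacobi {R : Type*} [CommRing R] {n : ℕ}
    (M : Matrix (Fin (n + 2)) (Fin (n + 2)) R) :
    M.det *
      (M.submatrix (fun k : Fin n => k.succ.castSucc)
        (fun k : Fin n => k.succ.castSucc)).det =
    (M.submatrix (Fin.last (n + 1)).succAbove (Fin.last (n + 1)).succAbove).det *
      (M.submatrix (0 : Fin (n + 2)).succAbove (0 : Fin (n + 2)).succAbove).det -
    (M.submatrix (0 : Fin (n + 2)).succAbove (Fin.last (n + 1)).succAbove).det *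
      (M.submatrix (Fin.last (n + 1)).succAbove (0 : Fin (n + 2)).succAbove).det := by
  have hsign : (-1 : R) ^ (n + 1 + (n + 1)) = 1 := Even.neg_one_pow ⟨n + 1, rfl⟩
  let e := Fin.endsSumInteriorEquiv n
  have h := (M.submatrix e e).det_adjugate_toBlocks₁₁
  rw [adjugate_submatrix_equiv_self, det_submatrix_equiv_self, det_fin_two] at h
  simp only [toBlocks₁₁, toBlocks₂₂, of_apply, submatrix_apply, e, Fin.endsSumInteriorEquiv,
    Equiv.ofBijective_apply, Sum.elim_inl, Sum.elim_inr, cons_val_zero, cons_val_one,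
    adjugate_fin_succ_eq_det_submatrix, Fin.val_zero, Fin.val_last, Fintype.card_fin,
    Nat.reduceSub, pow_one, zero_add, add_zero, pow_zero, one_mul,
    mul_mul_mul_comm ((-1 : R) ^ (n + 1)), ← pow_add, hsign] at h
  rw [← submatrix] at h
  linear_combination -h
end

section
/- Define T(g,a)_{i,j} = (ag)^{i+j} · Σ_{k=0}^{min(i,j)} C(i,k)·C(j,k)·a^{-2k} for i,j ≥ 0, where a is an invertible element. Then the double generating function satisfies Σ_{i,j≥0} T(g,a)_{i,j} u^i v^j = 1 / (1 − g·a·(u+v) − g²·(1−a²)·u·v) as an identity of formal power series in u and v. -/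
/-!
With `D_b(i, j) = Σ_k C(i,k) C(j,k) b^k` we have `T_{i,j} = (ag)^{i+j} D_{a⁻²}(i, j)`. Pascal's rule
in both indices gives `D_b(i+1, j+1) = D_b(i, j+1) + D_b(i+1, j) + (b - 1) D_b(i, j)` with
`D_b(i, 0) = D_b(0, j) = 1`; multiplied by `(ag)^{i+j+2}` this is exactly the recurrence saying that
every coefficient of `F · (1 - ga(u+v) - g²(1-a²)uv)` other than the constant one vanishes.
-/

open Finset

/-- For `b = 2` these are the Delannoy numbers. -/
def weightedDelannoy {R : Type*} [CommRing R] (b : R) (i j : ℕ) : R :=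
  ∑ k ∈ range (min i j + 1), (i.choose k * j.choose k : R) * b ^ k

section weightedDelannoy

variable {R : Type*} [CommRing R] (b : R)

theorem weightedDelannoy_eq_sum_range {i j n : ℕ} (hn : min i j < n) :
    weightedDelannoy b i j = ∑ k ∈ range n, (i.choose k * j.choose k : R) * b ^ k := by
  refine sum_subset (range_subset_range.2 hn) fun k _ hk => ?_
  have : i < k ∨ j < k := by simp only [mem_range] at hk; omega
  rcases this with h | h <;> simp [Nat.choose_eq_zero_of_lt h]

@[simp]
theorem weightedDelannoy_zero_left (j : ℕ) : weightedDelannoy b 0 j = 1 := by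
  simp [weightedDelannoy]

@[simp]
theorem weightedDelannoy_zero_right (i : ℕ) : weightedDelannoy b i 0 = 1 := by
  simp [weightedDelannoy]

theorem weightedDelannoy_succ_succ (i j : ℕ) :
    weightedDelannoy b (i + 1) (j + 1) =
      weightedDelannoy b i (j + 1) + weightedDelannoy b (i + 1) j
        + (b - 1) * weightedDelannoy b i j := by
  set n := i + j + 2
  have pascal : ∀ k,
      ((i + 1).choose (k + 1) * (j + 1).choose (k + 1) : R) * b ^ (k + 1)
        - (i.choose (k + 1) * (j + 1).choose (k + 1) : R) * b ^ (k + 1)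
        - ((i + 1).choose (k + 1) * j.choose (k + 1) : R) * b ^ (k + 1)
        + (i.choose (k + 1) * j.choose (k + 1) : R) * b ^ (k + 1)
        = (i.choose k * j.choose k : R) * b ^ (k + 1) := by
    intro k
    simp only [Nat.choose_succ_succ', Nat.cast_add]
    ring
  have shifted : b * weightedDelannoy b i j
      = ∑ k ∈ range n, (i.choose k * j.choose k : R) * b ^ (k + 1) := by
    rw [weightedDelannoy_eq_sum_range b (n := n) (by omega), mul_sum]
    exact sum_congr rfl fun k _ => by ring
  have second_difference : weightedDelannoy b (i + 1) (j + 1) - weightedDelannoy b i (j + 1)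
      - weightedDelannoy b (i + 1) j + weightedDelannoy b i j = b * weightedDelannoy b i j := by
    rw [shifted, weightedDelannoy_eq_sum_range b (n := n + 1) (by omega),
      weightedDelannoy_eq_sum_range b (i := i) (n := n + 1) (by omega),
      weightedDelannoy_eq_sum_range b (j := j) (n := n + 1) (by omega),
      weightedDelannoy_eq_sum_range b (i := i) (j := j) (n := n + 1) (by omega),
      ← sum_sub_distrib, ← sum_sub_distrib, ← sum_add_distrib, sum_range_succ']
    simp [pascal]
  linear_combination second_difference

end weightedDelannoy

namespace MvPowerSeries

theorem coeff_mul_X_eq_ite {σ R : Type*} [CommSemiring R] (φ : MvPowerSeries σ R) (s : σ)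
    (d : σ →₀ ℕ) :
    coeff d (φ * X s) = if d s = 0 then 0 else coeff (d - Finsupp.single s 1) φ := by
  simp only [X_def, coeff_mul_monomial, Finsupp.single_le_iff, mul_one]
  split_ifs <;> first | rfl | omega

theorem mul_eq_one_of_bivariate_recurrence {R : Type*} [CommRing R] (F : MvPowerSeries (Fin 2) R)
    (f : ℕ → ℕ → R) (hF : ∀ d, coeff d F = f (d 0) (d 1)) (c e : R)
    (h₀₀ : f 0 0 = 1) (hi₀ : ∀ i, f (i + 1) 0 = c * f i 0) (h₀j : ∀ j, f 0 (j + 1) = c * f 0 j)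
    (hij : ∀ i j, f (i + 1) (j + 1) = c * f i (j + 1) + c * f (i + 1) j + e * f i j) :
    F * (1 - C c * (X 0 + X 1) - C e * (X 0 * X 1)) = 1 := by
  ext d
  have hd : d = 0 ↔ d 0 = 0 ∧ d 1 = 0 := by
    simp [Finsupp.ext_iff, Fin.forall_fin_two]
  simp only [mul_sub, mul_one, mul_add, mul_left_comm _ (C _), ← mul_assoc, map_sub, map_add,
    coeff_C_mul, coeff_mul_X_eq_ite, coeff_one, hd, hF, Finsupp.tsub_apply, Finsupp.single_apply,
    if_true, zero_ne_one, one_ne_zero, if_false, tsub_zero]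
  rcases d 0 with _ | i <;> rcases d 1 with _ | j
  · simp [h₀₀]
  · simp [h₀j]
  · simp [hi₀]
  · simp [hij]

end MvPowerSeries

open MvPowerSeries

/-- The double generating function of the Lorentzian gravity transfer matrix
`T(g,a)_{i,j} = (ag)^{i+j} Σ_{k=0}^{min(i,j)} C(i,k) C(j,k) a^{-2k}` satisfies
`Σ T_{i,j} u^i v^j = 1/(1 - ga(u+v) - g²(1-a²)uv)`, stated multiplicatively. -/
theorem lorentzian_transfer_generating_function {K : Type*} [Field K]
    (g a : K) (ha : a ≠ 0) :
    let T : ℕ → ℕ → K := fun i j =>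
      (a * g) ^ (i + j) *
        ∑ k ∈ Finset.range (min i j + 1),
          ((i.choose k : K) * (j.choose k : K)) * (a⁻¹) ^ (2 * k)
    let F : MvPowerSeries (Fin 2) K := fun d => T (d 0) (d 1)
    let u : MvPowerSeries (Fin 2) K := MvPowerSeries.X 0
    let v : MvPowerSeries (Fin 2) K := MvPowerSeries.X 1
    F * (1 - (MvPowerSeries.C : K →+* MvPowerSeries (Fin 2) K) (g * a) * (u + v)
          - (MvPowerSeries.C : K →+* MvPowerSeries (Fin 2) K) (g ^ 2 * (1 - a ^ 2)) * (u * v)) = 1 := by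
  intro T F u v
  have hT : ∀ i j, T i j = (a * g) ^ (i + j) * weightedDelannoy (a⁻¹ ^ 2) i j := fun i j => by
    simp only [T, weightedDelannoy, pow_mul]
  have hscale : (a * g) ^ 2 * (a⁻¹ ^ 2 - 1) = g ^ 2 * (1 - a ^ 2) := by
    field_simp
  refine mul_eq_one_of_bivariate_recurrence F T (fun _ => rfl) _ _ ?_ ?_ ?_ ?_
  · simp [hT]
  · intro i
    rw [hT, hT, weightedDelannoy_zero_right, weightedDelannoy_zero_right]
    ring
  · intro j
    rw [hT, hT, weightedDelannoy_zero_left, weightedDelannoy_zero_left]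
    ring
  · intro i j
    simp only [hT, weightedDelannoy_succ_succ]
    linear_combination (a * g) ^ (i + j) * weightedDelannoy (a⁻¹ ^ 2) i j * hscale
end

section
/- For any n ≥ 1, the determinant of the n×n matrix with entries T(g,a)_{i,j} = (ag)^{i+j} · Σ_{k=0}^{min(i,j)} C(i,k)·C(j,k)·a^{-2k} for 0 ≤ i,j ≤ n−1 equals g^{n(n−1)}. -/
/-- The determinant of the n×n truncation of the Lorentzian gravity transfer matrix
`T(g,a)` equals `g^{n(n-1)}`. -/
theorem det_lorentzian_transfer_truncation {K : Type*} [Field K]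
    (g a : K) (ha : a ≠ 0) (n : ℕ) (hn : 1 ≤ n) :
    let T : ℕ → ℕ → K := fun i j =>
      (a * g) ^ (i + j) *
        ∑ k ∈ Finset.range (min i j + 1),
          ((i.choose k : K) * (j.choose k : K)) * (a⁻¹) ^ (2 * k)
    (Matrix.of fun i j : Fin n => T i j).det = g ^ (n * (n - 1)) := by
  intro T
  set V : Matrix (Fin n) (Fin n) K :=
    Matrix.of (fun i k : Fin n =>
      (Nat.choose i.1 k.1 : K) * a ^ i.1 * (a⁻¹) ^ k.1 * g ^ i.1) with hV
  have hT : (Matrix.of fun i j : Fin n => T i j) = V * V.transpose := by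
    ext i j
    simp only [Matrix.mul_apply, Matrix.transpose_apply, Matrix.of_apply, hV, T]
    rw [Fin.sum_univ_eq_sum_range
      (fun k => ((Nat.choose i.1 k : K) * a ^ i.1 * (a⁻¹) ^ k * g ^ i.1) *
        ((Nat.choose j.1 k : K) * a ^ j.1 * (a⁻¹) ^ k * g ^ j.1)) n]
    rw [Finset.mul_sum]
    refine Finset.sum_subset ?_ ?_ |>.symm.trans (Finset.sum_congr rfl ?_) |>.symm
    · refine Finset.range_subset_range.2 ?_
      have := i.2; have := j.2; omega
    · intro k hk hk'
      simp only [Finset.mem_range, not_lt] at hk hk'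
      rcases Nat.lt_or_ge i.1 k with h | h
      · rw [Nat.choose_eq_zero_of_lt h]; ring
      · have hj : j.1 < k := by omega
        rw [Nat.choose_eq_zero_of_lt hj]; ring
    · intro k hk
      ring
  rw [hT, Matrix.det_mul, Matrix.det_transpose]
  have hdet : V.det = ∏ i : Fin n, g ^ i.1 := by
    rw [Matrix.det_of_lowerTriangular V]
    · refine Finset.prod_congr rfl fun i _ => ?_
      simp only [hV, Matrix.of_apply, Nat.choose_self, Nat.cast_one, one_mul, inv_pow,
        mul_inv_cancel₀ (pow_ne_zero i.1 ha)]
    · intro i j hij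
      have h : (i : ℕ) < j := hij
      simp only [hV, Matrix.of_apply]
      rw [Nat.choose_eq_zero_of_lt h]
      simp
  rw [hdet, Finset.prod_pow_eq_pow_sum, ← pow_add, ← two_mul]
  congr 1
  rw [Fin.sum_univ_eq_sum_range (fun k => k) n]
  have := Finset.sum_range_id_mul_two n
  omega
end

section
/- Let U(α,β) be the infinite upper triangular matrix with entries U(α,β)_{i,j} = C(j,i)·α^i·β^j. Then, provided 1 + α'β is invertible, U(α,β)·U(α',β') = U(αβα'/(1+α'β), β'(1+α'β)); that is, for all i ≤ j, Σ_{k=i}^{j} C(k,i)·α^i·β^k · C(j,k)·(α')^k·(β')^j = C(j,i)·(αβα'/(1+α'β))^i·(β'(1+α'β))^j. -/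
/-- Product formula for the upper triangular infinite matrices
`U(α,β)_{i,j} = C(j,i) α^i β^j`:
`U(α,β)·U(α',β') = U(αβα'/(1+α'β), β'(1+α'β))`, provided `1+α'β` is invertible.
Entrywise: for all `i, j`,
`Σ_k C(k,i) α^i β^k · C(j,k) α'^k β'^j = C(j,i) (αβα'/(1+α'β))^i (β'(1+α'β))^j`,
the sum being finite by triangularity. -/
theorem U_mul_U_formula {K : Type*} [Field K] (α β α' β' : K) (h : 1 + α' * β ≠ 0) :
    ∀ i j : ℕ,
      (∑ k ∈ Finset.range (j + 1),
        ((k.choose i : K) * α ^ i * β ^ k) * ((j.choose k : K) * α' ^ k * β' ^ j)) =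
      (j.choose i : K) * (α * β * α' / (1 + α' * β)) ^ i * (β' * (1 + α' * β)) ^ j := by
  intro i j
  set x : K := α' * β with hx
  by_cases hij : i ≤ j
  · -- LHS = Σ_{k=i}^{j} ...
    have hstep : (∑ k ∈ Finset.range (j + 1),
        ((k.choose i : K) * α ^ i * β ^ k) * ((j.choose k : K) * α' ^ k * β' ^ j)) =
        ∑ k ∈ Finset.Ico i (j + 1),
        ((k.choose i : K) * α ^ i * β ^ k) * ((j.choose k : K) * α' ^ k * β' ^ j) := by
      rw [Finset.range_eq_Ico, ← Finset.sum_Ico_consecutive _ (Nat.zero_le i)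
        (by omega : i ≤ j + 1)]
      have : ∀ k ∈ Finset.Ico 0 i,
          ((k.choose i : K) * α ^ i * β ^ k) * ((j.choose k : K) * α' ^ k * β' ^ j) = 0 := by
        intro k hk
        simp only [Finset.mem_Ico] at hk
        rw [Nat.choose_eq_zero_of_lt hk.2]
        ring
      rw [Finset.sum_eq_zero this, zero_add]
    rw [hstep, Finset.sum_Ico_eq_sum_range]
    have hterm : ∀ m ∈ Finset.range (j + 1 - i),
        (((i + m).choose i : K) * α ^ i * β ^ (i + m)) *
          ((j.choose (i + m) : K) * α' ^ (i + m) * β' ^ j) =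
        ((j.choose i : K) * α ^ i * x ^ i * β' ^ j) * (((j - i).choose m : K) * x ^ m) := by
      intro m hm
      simp only [Finset.mem_range] at hm
      have hk : i + m ≤ j := by omega
      have hc : (j.choose (i + m) * (i + m).choose i : ℕ) =
          j.choose i * (j - i).choose m := by
        rw [Nat.choose_mul (n := j) (Nat.le_add_right i m), Nat.add_sub_cancel_left]
      have hc' : ((j.choose (i + m) : K) * ((i + m).choose i : K)) =
          (j.choose i : K) * ((j - i).choose m : K) := by
        exact_mod_cast congrArg (Nat.cast : ℕ → K) hc
      have : β ^ (i + m) * α' ^ (i + m) = x ^ (i + m) := by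
        rw [hx]; ring
      calc (((i + m).choose i : K) * α ^ i * β ^ (i + m)) *
            ((j.choose (i + m) : K) * α' ^ (i + m) * β' ^ j)
          = ((j.choose (i + m) : K) * ((i + m).choose i : K)) *
            (α ^ i * (β ^ (i + m) * α' ^ (i + m)) * β' ^ j) := by ring
        _ = ((j.choose i : K) * ((j - i).choose m : K)) *
            (α ^ i * x ^ (i + m) * β' ^ j) := by rw [hc', this]
        _ = ((j.choose i : K) * α ^ i * x ^ i * β' ^ j) *
            (((j - i).choose m : K) * x ^ m) := by rw [pow_add]; ring
    rw [Finset.sum_congr rfl hterm, ← Finset.mul_sum]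
    have hbin : (∑ m ∈ Finset.range (j + 1 - i), ((j - i).choose m : K) * x ^ m) =
        (1 + x) ^ (j - i) := by
      have h1 : j + 1 - i = (j - i) + 1 := by omega
      rw [h1, add_comm (1 : K) x, add_pow]
      refine Finset.sum_congr rfl fun m hm => ?_
      rw [one_pow]; ring
    rw [hbin]
    -- now an algebraic identity
    have hps : (1 + x) ^ (j - i) = (1 + x) ^ j / (1 + x) ^ i := by
      rw [pow_sub₀ _ h hij, div_eq_mul_inv]
    rw [hps, hx]
    field_simp
    rw [mul_pow (1 + α' * β) β']
    ring
  · have hz : ∀ k ∈ Finset.range (j + 1),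
        ((k.choose i : K) * α ^ i * β ^ k) * ((j.choose k : K) * α' ^ k * β' ^ j) = 0 := by
      intro k hk
      simp only [Finset.mem_range] at hk
      rw [Nat.choose_eq_zero_of_lt (by omega)]
      ring
    rw [Finset.sum_eq_zero hz, Nat.choose_eq_zero_of_lt (by omega)]
    ring
end

section
/- Let L(α,β)_{i,j} = C(i,j)α^jβ^i (lower triangular) and U(α',β')_{i,j} = C(j,i)(α')^i(β')^j (upper triangular). Then the product L(α,β)·U(α',β') is the matrix T(β, β', ββ'(αα'−1)) whose double generating function is 1/(1 − β·u − β'·v − ββ'(αα'−1)·u·v). Concretely, for all i,j ≥ 0: Σ_{k=0}^{min(i,j)} C(i,k)α^kβ^i·C(j,k)(α')^k(β')^j equals the coefficient of u^i v^j in 1/(1 − βu − β'v − ββ'(αα'−1)uv). -/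
/-!
Both sides are the array `T` determined by `T 0 0 = 1` and
`T i j = β T (i-1) j + β' T i (j-1) + ββ'(αα'-1) T (i-1) (j-1)`, entries at negative indices being
zero. For the generating function this says that it times `1 - βu - β'v - ββ'(αα'-1)uv` is `1`.
The sum is `β^i β'^j P i j` with `P i j = Σ_k C(i,k) C(j,k) (αα')^k`, and by Pascal's rule the mixed
second difference of `C(i,k) C(j,k)` in `(i, j)` is `C(i-1,k-1) C(j-1,k-1)`, so that
`P i j - P (i-1) j - P i (j-1) + P (i-1) (j-1) = αα' P (i-1) (j-1)`.
-/

open MvPowerSeries Finset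

section ChooseProdSum

variable {R : Type*}

def chooseProdSum [Semiring R] (x : R) (i j : ℕ) : R :=
  ∑ k ∈ range (min i j + 1), (i.choose k * j.choose k : R) * x ^ k

theorem chooseProdSum_eq_sum_range [Semiring R] (x : R) {i j n : ℕ} (h : min i j ≤ n) :
    chooseProdSum x i j = ∑ k ∈ range (n + 1), (i.choose k * j.choose k : R) * x ^ k := by
  refine sum_subset (range_subset_range.mpr (by omega)) fun k _ hk => ?_
  rcases (by simp only [mem_range] at hk; omega : i < k ∨ j < k) with h | h <;>
    simp [Nat.choose_eq_zero_of_lt h]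

@[simp]
theorem chooseProdSum_zero_left [Semiring R] (x : R) (j : ℕ) : chooseProdSum x 0 j = 1 := by
  simp [chooseProdSum]

@[simp]
theorem chooseProdSum_zero_right [Semiring R] (x : R) (i : ℕ) : chooseProdSum x i 0 = 1 := by
  simp [chooseProdSum]

theorem chooseProdSum_succ_succ [CommRing R] (x : R) (i j : ℕ) :
    chooseProdSum x (i + 1) (j + 1) =
      chooseProdSum x i (j + 1) + chooseProdSum x (i + 1) j + (x - 1) * chooseProdSum x i j := by
  set n := min i j + 1
  have hdiff : ∀ k, (((i + 1).choose k * (j + 1).choose k : R) - i.choose k * (j + 1).choose k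
      - (i + 1).choose k * j.choose k + i.choose k * j.choose k) * x ^ k =
      if k = 0 then 0 else x * ((i.choose (k - 1) * j.choose (k - 1) : R) * x ^ (k - 1)) := by
    rintro (_ | k)
    · simp
    · simp only [Nat.choose_succ_succ, Nat.cast_add, add_tsub_cancel_right, if_neg k.succ_ne_zero]
      ring
  have key : ∑ k ∈ range (n + 1), (((i + 1).choose k * (j + 1).choose k : R)
      - i.choose k * (j + 1).choose k - (i + 1).choose k * j.choose k
      + i.choose k * j.choose k) * x ^ k = x * chooseProdSum x i j := by
    rw [sum_range_succ', chooseProdSum, mul_sum]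
    simp only [hdiff, Nat.add_one_ne_zero, if_false, if_true, add_tsub_cancel_right, add_zero]
    rfl
  simp only [sub_mul, add_mul, sum_add_distrib, sum_sub_distrib] at key
  rw [chooseProdSum_eq_sum_range x (n := n) (by omega),
    chooseProdSum_eq_sum_range x (i := i) (n := n) (by omega),
    chooseProdSum_eq_sum_range x (j := j) (n := n) (by omega)]
  rw [chooseProdSum_eq_sum_range x (i := i) (j := j) (n := n) (by omega)] at key ⊢
  linear_combination key

end ChooseProdSum

section MulX

variable {σ R : Type*} [Semiring R]

theorem MvPowerSeries.coeff_add_single_mul_X (φ : MvPowerSeries σ R) (n : σ →₀ ℕ) (s : σ) :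
    coeff (n + Finsupp.single s 1) (φ * X s) = coeff n φ := by
  rw [X_def, coeff_add_mul_monomial, mul_one]

theorem MvPowerSeries.coeff_mul_X_of_apply_eq_zero (φ : MvPowerSeries σ R) {n : σ →₀ ℕ} {s : σ}
    (h : n s = 0) : coeff n (φ * X s) = 0 := by
  classical
  rw [X_def, coeff_mul_monomial, if_neg (by simp [Finsupp.single_le_iff, h])]

end MulX

theorem Finsupp.eq_single_add_single_of_fin_two (d : Fin 2 →₀ ℕ) :
    d = Finsupp.single 0 (d 0) + Finsupp.single 1 (d 1) := by
  ext a; fin_cases a <;> simp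

section Bivariate

variable {R : Type*} [Semiring R]

theorem coeff_succ_left_mul_X_zero (φ : MvPowerSeries (Fin 2) R) (i j : ℕ) :
    coeff (Finsupp.single 0 (i + 1) + Finsupp.single 1 j) (φ * X 0) =
      coeff (Finsupp.single 0 i + Finsupp.single 1 j) φ := by
  rw [Finsupp.single_add, add_right_comm, coeff_add_single_mul_X]

theorem coeff_succ_right_mul_X_one (φ : MvPowerSeries (Fin 2) R) (i j : ℕ) :
    coeff (Finsupp.single 0 i + Finsupp.single 1 (j + 1)) (φ * X 1) =
      coeff (Finsupp.single 0 i + Finsupp.single 1 j) φ := by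
  rw [Finsupp.single_add, ← add_assoc, coeff_add_single_mul_X]

theorem coeff_inv_eq_of_recurrence {K : Type*} [Field K] (b b' c : K) (g : ℕ → ℕ → K)
    (h00 : g 0 0 = 1) (hsucc0 : ∀ i, g (i + 1) 0 = b * g i 0)
    (h0succ : ∀ j, g 0 (j + 1) = b' * g 0 j)
    (hsuccsucc : ∀ i j, g (i + 1) (j + 1) = b * g i (j + 1) + b' * g (i + 1) j + c * g i j)
    (i j : ℕ) :
    coeff (Finsupp.single 0 i + Finsupp.single 1 j)
      (1 - C b * X 0 - C b' * X 1 - C c * (X 0 * X 1) : MvPowerSeries (Fin 2) K)⁻¹ = g i j := by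
  let G : MvPowerSeries (Fin 2) K := fun d => g (d 0) (d 1)
  have hG : ∀ d, coeff d G = g (d 0) (d 1) := fun _ => rfl
  have hD0 : constantCoeff (1 - C b * X 0 - C b' * X 1 - C c * (X 0 * X 1) :
      MvPowerSeries (Fin 2) K) ≠ 0 := by
    simp
  have hGD : G * (1 - C b * X 0 - C b' * X 1 - C c * (X 0 * X 1)) = 1 := by
    ext d
    rw [d.eq_single_add_single_of_fin_two]
    generalize d 0 = i, d 1 = j
    have hX01 : G * (X 0 * X 1) = G * X 1 * X 0 := by ring
    simp only [mul_sub, mul_one, mul_left_comm G (C _), hX01, map_sub, coeff_C_mul]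
    rcases i with _ | i <;> rcases j with _ | j
    · simp [coeff_mul_X_of_apply_eq_zero, hG, h00]
    · simp only [coeff_succ_right_mul_X_one]
      simp [coeff_mul_X_of_apply_eq_zero, coeff_one, hG, h0succ]
    · simp only [coeff_succ_left_mul_X_zero]
      simp [coeff_mul_X_of_apply_eq_zero, coeff_one, hG, hsucc0]
    · simp only [coeff_succ_left_mul_X_zero, coeff_succ_right_mul_X_one]
      simp [coeff_one, hG, hsuccsucc]
      ring
  rw [(MvPowerSeries.inv_eq_iff_mul_eq_one hD0).2 hGD]
  simp [hG]

end Bivariate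

/-- `L(α,β)·U(α',β') = T(β, β', ββ'(αα'-1))`: for all `i, j`,
`Σ_{k=0}^{min(i,j)} C(i,k) α^k β^i · C(j,k) α'^k β'^j` equals the coefficient of
`u^i v^j` in `1/(1 - βu - β'v - ββ'(αα'-1)uv)`. -/
theorem L_mul_U_eq_T {K : Type*} [Field K] (α β α' β' : K) :
    let u : MvPowerSeries (Fin 2) K := MvPowerSeries.X 0
    let v : MvPowerSeries (Fin 2) K := MvPowerSeries.X 1
    let F : MvPowerSeries (Fin 2) K :=
      (1 - MvPowerSeries.C β * u - MvPowerSeries.C β' * v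
        - MvPowerSeries.C (β * β' * (α * α' - 1)) * (u * v))⁻¹
    ∀ i j : ℕ,
      (∑ k ∈ Finset.range (min i j + 1),
        ((i.choose k : K) * α ^ k * β ^ i) * ((j.choose k : K) * α' ^ k * β' ^ j)) =
      MvPowerSeries.coeff (Finsupp.single 0 i + Finsupp.single 1 j) F := by
  intro u v F i j
  have hsum : ∑ k ∈ range (min i j + 1),
      ((i.choose k : K) * α ^ k * β ^ i) * ((j.choose k : K) * α' ^ k * β' ^ j) =
      β ^ i * β' ^ j * chooseProdSum (α * α') i j := by
    rw [chooseProdSum, mul_sum]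
    exact sum_congr rfl fun k _ => by ring
  rw [hsum]
  refine (coeff_inv_eq_of_recurrence β β' _
    (fun i j => β ^ i * β' ^ j * chooseProdSum (α * α') i j)
    (by simp) (fun i => by simp [pow_succ]; ring) (fun j => by simp [pow_succ]; ring)
    (fun i j => ?_) i j).symm
  simp only [chooseProdSum_succ_succ, pow_succ]
  ring
end

section
/- The eigenvector generating functions f_m(u) = √(1−q²)·(q−u)^m/(1−qu)^{m+1} define vectors v^{(m)} = (coefficients of u^i in f_m) that are orthonormal: Σ_{i≥0} v_i^{(m)} v_i^{(m')} = δ_{m,m'}, where the sum is interpreted as the constant term in t of f_m(t)·f_{m'}(t^{-1}) (equivalently, evaluated as a convergent series/residue for |q| < 1). -/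
/-!
Put `s = √(1 - q²)` and `B = (q - X)/(1 - qX)`, so that `f (m + 1) = B f m` and
`f 0 = s/(1 - qX)`. On coefficient sequences, `g ↦ B g` is the input-output map of the linear
system with state `x (n + 1) = q x n + s a n` and output `q a n - s x n`, whose matrix
`[[q, s], [-s, q]]` is a rotation. Hence `∑_{n<N} a n b n = ∑_{n<N} (B a) n (B b) n + x N y N`,
and on `ℓ²` the state tends to `0`, so `B` is an isometry. Moreover `s qⁿ (B a) n` telescopes to
the state term `q^N x N` (the coefficient form of `B(q) = 0`), so the image of `B` is orthogonal
to `f 0 = (s qⁿ)`, which has norm one. Orthonormality of `f m = Bᵐ f 0` follows by induction.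
-/

open PowerSeries Finset Filter Topology

theorem summable_mul_of_summable_sq {ι : Type*} {a b : ι → ℝ} (ha : Summable fun i => a i ^ 2)
    (hb : Summable fun i => b i ^ 2) : Summable fun i => a i * b i :=
  ((ha.add hb).div_const 2).of_norm_bounded fun i => by
    rw [Real.norm_eq_abs, abs_mul]
    nlinarith [sq_abs (a i), sq_abs (b i), sq_nonneg (|a i| - |b i|)]

theorem PowerSeries.inv_one_sub_C_mul_X {k : Type*} [Field k] (q : k) :
    (1 - C q * X)⁻¹ = mk (q ^ ·) := by
  rw [PowerSeries.inv_eq_iff_mul_eq_one (by simp)]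
  simpa [rescale_mk] using congrArg (rescale q) (mk_one_mul_one_sub_eq_one k)

namespace Blaschke

section Algebra

variable {R : Type*} [CommRing R] (q s : R)

def state (a : ℕ → R) : ℕ → R
  | 0 => 0
  | n + 1 => q * state a n + s * a n

def output (a : ℕ → R) (n : ℕ) : R := q * a n - s * state q s a n

variable {q s}

theorem state_succ_mul_add_output_mul (hqs : q ^ 2 + s ^ 2 = 1) (a b : ℕ → R) (n : ℕ) :
    state q s a (n + 1) * state q s b (n + 1) + output q s a n * output q s b n =
      state q s a n * state q s b n + a n * b n := by
  simp only [state, output]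
  linear_combination (state q s a n * state q s b n + a n * b n) * hqs

theorem sum_range_mul_eq_sum_range_output_mul_add (hqs : q ^ 2 + s ^ 2 = 1) (a b : ℕ → R)
    (n : ℕ) :
    ∑ i ∈ range n, a i * b i =
      ∑ i ∈ range n, output q s a i * output q s b i + state q s a n * state q s b n := by
  induction n with
  | zero => simp [state]
  | succ n ih =>
    rw [sum_range_succ, sum_range_succ, ih]
    linear_combination -state_succ_mul_add_output_mul hqs a b n

theorem mul_sum_range_pow_mul_output (hqs : q ^ 2 + s ^ 2 = 1) (a : ℕ → R) (n : ℕ) :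
    s * ∑ i ∈ range n, q ^ i * output q s a i = q ^ n * state q s a n := by
  induction n with
  | zero => simp [state]
  | succ n ih =>
    rw [sum_range_succ, mul_add, ih]
    simp only [state, output]
    linear_combination -(q ^ n * state q s a n) * hqs

end Algebra

section Real

variable {q s : ℝ} {a b : ℕ → ℝ}

theorem ne_zero_of_sq_add_sq_eq_one (hqs : q ^ 2 + s ^ 2 = 1) (hq : |q| < 1) : s ≠ 0 := by
  rintro rfl
  nlinarith [sq_abs q, abs_nonneg q]

theorem summable_output_sq (hqs : q ^ 2 + s ^ 2 = 1) (ha : Summable fun i => a i ^ 2) :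
    Summable fun i => output q s a i ^ 2 := by
  refine summable_of_sum_range_le (c := ∑' i, a i ^ 2) (fun _ => sq_nonneg _) fun n => ?_
  calc ∑ i ∈ range n, output q s a i ^ 2
      ≤ ∑ i ∈ range n, a i ^ 2 := by
        simp only [sq, sum_range_mul_eq_sum_range_output_mul_add hqs a a n]
        linarith [mul_self_nonneg (state q s a n)]
    _ ≤ ∑' i, a i ^ 2 := ha.sum_le_tsum _ fun i _ => sq_nonneg (a i)

theorem tendsto_state (hqs : q ^ 2 + s ^ 2 = 1) (hq : |q| < 1) (ha : Summable fun i => a i ^ 2) :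
    Tendsto (state q s a) atTop (𝓝 0) := by
  have hsq : Tendsto (fun n => state q s a n ^ 2) atTop
      (𝓝 (∑' i, a i ^ 2 - ∑' i, output q s a i ^ 2)) := by
    refine (ha.hasSum.tendsto_sum_nat.sub
      (summable_output_sq hqs ha).hasSum.tendsto_sum_nat).congr fun n => ?_
    simp only [sq, sum_range_mul_eq_sum_range_output_mul_add hqs a a n]
    ring
  set ℓ := √(∑' i, a i ^ 2 - ∑' i, output q s a i ^ 2)
  have habs : Tendsto (fun n => |state q s a n|) atTop (𝓝 ℓ) := by
    simpa only [Real.sqrt_sq_eq_abs] using hsq.sqrt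
  have ha0 : Tendsto (fun n => |a n|) atTop (𝓝 0) := by
    simpa only [Real.sqrt_sq_eq_abs, Real.sqrt_zero] using ha.tendsto_atTop_zero.sqrt
  -- the recursion `x (n+1) = q x n + s a n` passes to the limit as `ℓ ≤ |q| ℓ`
  have hle : ℓ ≤ |q| * ℓ + |s| * 0 :=
    le_of_tendsto_of_tendsto' ((tendsto_add_atTop_iff_nat 1).2 habs)
      ((habs.const_mul _).add (ha0.const_mul _)) fun n => by
        simpa only [state, abs_mul] using abs_add_le (q * state q s a n) (s * a n)
  have hℓ0 : 0 ≤ ℓ := Real.sqrt_nonneg _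
  have hℓ : ℓ = 0 := by nlinarith [abs_nonneg q]
  exact tendsto_zero_iff_abs_tendsto_zero _ |>.2 (hℓ ▸ habs)

theorem hasSum_output_mul (hqs : q ^ 2 + s ^ 2 = 1) (hq : |q| < 1)
    (ha : Summable fun i => a i ^ 2) (hb : Summable fun i => b i ^ 2) {S : ℝ}
    (hab : HasSum (fun i => a i * b i) S) :
    HasSum (fun i => output q s a i * output q s b i) S := by
  refine (summable_mul_of_summable_sq (summable_output_sq hqs ha)
    (summable_output_sq hqs hb)).hasSum_iff_tendsto_nat.2 ?_
  have h := hab.tendsto_sum_nat.sub ((tendsto_state hqs hq ha).mul (tendsto_state hqs hq hb))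
  rw [mul_zero, sub_zero] at h
  refine h.congr fun n => ?_
  rw [sum_range_mul_eq_sum_range_output_mul_add hqs a b n, add_sub_cancel_right]

theorem summable_pow_sq (hq : |q| < 1) : Summable fun i => (q ^ i) ^ 2 := by
  refine (summable_geometric_of_lt_one (sq_nonneg q) ?_).congr fun i => by ring
  nlinarith [sq_abs q, abs_nonneg q]

theorem hasSum_pow_mul_output (hqs : q ^ 2 + s ^ 2 = 1) (hq : |q| < 1)
    (ha : Summable fun i => a i ^ 2) : HasSum (fun i => q ^ i * output q s a i) 0 := by
  refine (summable_mul_of_summable_sq (summable_pow_sq hq)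
    (summable_output_sq hqs ha)).hasSum_iff_tendsto_nat.2 ?_
  have h := ((tendsto_pow_atTop_nhds_zero_of_abs_lt_one hq).mul
    (tendsto_state hqs hq ha)).div_const s
  rw [zero_mul, zero_div] at h
  refine h.congr fun n => ?_
  rw [← mul_sum_range_pow_mul_output hqs,
    mul_div_cancel_left₀ _ (ne_zero_of_sq_add_sq_eq_one hqs hq)]

theorem hasSum_iterate_output_mul (hqs : q ^ 2 + s ^ 2 = 1) (hq : |q| < 1) (m m' : ℕ) :
    HasSum (fun i => (output q s)^[m] (fun j => s * q ^ j) i *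
      (output q s)^[m'] (fun j => s * q ^ j) i) (if m = m' then 1 else 0) := by
  set e : ℕ → ℝ := fun j => s * q ^ j
  have hsq : ∀ m, Summable fun i => (output q s)^[m] e i ^ 2 := by
    intro m
    induction m with
    | zero =>
      exact ((summable_pow_sq hq).mul_left (s ^ 2)).congr fun i => by
        simp only [e, Function.iterate_zero, id]; ring
    | succ m ih => simpa only [Function.iterate_succ_apply'] using summable_output_sq hqs ih
  have he : HasSum (fun i => e i * e i) 1 := by
    have hq2 : q ^ 2 < 1 := by nlinarith [sq_abs q, abs_nonneg q]
    have h := (hasSum_geometric_of_lt_one (sq_nonneg q) hq2).mul_left (s ^ 2)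
    rw [show 1 - q ^ 2 = s ^ 2 by linarith,
      mul_inv_cancel₀ (pow_ne_zero 2 (ne_zero_of_sq_add_sq_eq_one hqs hq))] at h
    exact h.congr_fun fun i => by simp only [e]; ring
  have he_orth : ∀ k, HasSum (fun i => e i * (output q s)^[k + 1] e i) 0 := by
    intro k
    simpa only [Function.iterate_succ_apply', e, mul_zero, mul_assoc] using
      (hasSum_pow_mul_output hqs hq (hsq k)).mul_left s
  induction m generalizing m' with
  | zero =>
    cases m' with
    | zero => simpa using he
    | succ k => simpa using he_orth k
  | succ m ih =>
    cases m' with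
    | zero => simpa [mul_comm] using he_orth m
    | succ k =>
      simpa only [Function.iterate_succ_apply', add_left_inj] using
        hasSum_output_mul hqs hq (hsq m) (hsq k) (ih k)

end Real

theorem coeff_mul_eq_output {k : Type*} [Field k] {q s : k} (hqs : q ^ 2 + s ^ 2 = 1)
    (g : k⟦X⟧) (n : ℕ) :
    coeff n ((C q - X) * (1 - C q * X)⁻¹ * g) = output q s (fun i => coeff i g) n := by
  set x := mk (state q s fun i => coeff i g)
  have hx : (1 - C q * X) * x = C s * X * g := by
    ext n
    cases n with
    | zero => simp [x, state]
    | succ n => simp [x, state, sub_mul, mul_assoc, coeff_succ_X_mul]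
  have hC : C q ^ 2 + C s ^ 2 = (1 : k⟦X⟧) := by
    simp only [← map_pow, ← map_add, hqs, map_one]
  have hcleared : (1 - C q * X) * (C q * g - C s * x) = (C q - X) * g := by
    linear_combination (-C s) * hx - X * g * hC
  have hconst : constantCoeff (1 - C q * X) ≠ 0 := by simp
  have hmul : (C q - X) * (1 - C q * X)⁻¹ * g = C q * g - C s * x := by
    calc (C q - X) * (1 - C q * X)⁻¹ * g = (1 - C q * X)⁻¹ * ((C q - X) * g) := by ring
      _ = (1 - C q * X)⁻¹ * (1 - C q * X) * (C q * g - C s * x) := by rw [← hcleared]; ring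
      _ = C q * g - C s * x := by rw [PowerSeries.inv_mul_cancel _ hconst, one_mul]
  simp [hmul, output, x]

end Blaschke

/-- Orthonormality of the eigenvectors: for `0 < q < 1`, the Taylor coefficients
`v^{(m)}_i` of `f_m(u) = √(1-q²)(q-u)^m/(1-qu)^{m+1}` satisfy
`Σ_{i≥0} v^{(m)}_i v^{(m')}_i = δ_{m,m'}` (a convergent series in ℝ). -/
theorem lorentzian_eigenvectors_orthonormal (q : ℝ) (hq0 : 0 < q) (hq1 : q < 1) :
    let f : ℕ → PowerSeries ℝ := fun m =>
      PowerSeries.C (R := ℝ) (Real.sqrt (1 - q ^ 2)) *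
        (PowerSeries.C (R := ℝ) q - PowerSeries.X) ^ m *
        ((1 - PowerSeries.C (R := ℝ) q * PowerSeries.X)⁻¹) ^ (m + 1)
    let v : ℕ → ℕ → ℝ := fun m i => PowerSeries.coeff (R := ℝ) i (f m)
    ∀ m m' : ℕ,
      HasSum (fun i => v m i * v m' i) (if m = m' then (1 : ℝ) else 0) := by
  intro f v m m'
  set s := √(1 - q ^ 2)
  have hqs : q ^ 2 + s ^ 2 = 1 := by rw [Real.sq_sqrt (by nlinarith)]; ring
  have hv : ∀ m, v m = (Blaschke.output q s)^[m] (fun i => s * q ^ i) := by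
    intro m
    induction m with
    | zero => ext i; simp [v, f, s, inv_one_sub_C_mul_X]
    | succ m ih =>
      ext i
      rw [Function.iterate_succ_apply', ← ih, ← Blaschke.coeff_mul_eq_output hqs]
      simp only [v, f]
      congr 1
      ring
  have hq : |q| < 1 := abs_lt.2 ⟨by linarith, hq1⟩
  simpa only [hv] using Blaschke.hasSum_iterate_output_mul hqs hq m m'
end

section
/- Let ν satisfy x·ν·(1−ν) = ν + y·(1−ν). Define f_{ASM}(u,v) = (1−ν)/(1−uv) + ν/(1 − xu − v − (y−x)uv) and f_{DPP}(u,v) = 1/(1−uv) + (1/(1−u))·(yu)/(1 − xu − v − (y−x)uv). Then as an identity of formal power series in u and v over ℚ(x,y)(ν): (1 − u/(1−ν))·(1−v)·f_{ASM}(u,v) = (1−u)·(1 − (1−ν)v)·f_{DPP}(u,v). -/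
open MvPowerSeries

/-!
Both sides have the denominators `P = 1 - uv`, `Q = 1 - xu - v - (y - x)uv` and `1 - u`, all with
constant coefficient `1`, hence invertible power series. Clearing them leaves a polynomial identity in
`u, v`, which holds modulo `w(1 - ν) = 1` (with `w = (1 - ν)⁻¹`) and the defining relation of `ν`.
It is therefore true in every commutative ring in which these two relations hold.
-/

section CommRing

variable {A : Type*} [CommRing A]

theorem asm_dpp_cleared_identity (u v x y ν w : A) (hw : w * (1 - ν) = 1)
    (hrel : x * ν * (1 - ν) = ν + y * (1 - ν)) :
    (1 - u * w) * (1 - v) * ((1 - ν) * (1 - x * u - v - (y - x) * (u * v)) + ν * (1 - u * v)) =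
      (1 - (1 - ν) * v) *
        ((1 - u) * (1 - x * u - v - (y - x) * (u * v)) + y * u * (1 - u * v)) := by
  linear_combination (w * u * (1 - v) * (1 - u * v)) * hrel -
    ((1 - v) * ((1 - ν) * (1 - x * u - v - (y - x) * (u * v)) + ν * (1 - u * v)) -
      (1 - (1 - ν) * v) *
        ((1 - u) * (1 - x * u - v - (y - x) * (u * v)) + y * u * (1 - u * v))) * hw

theorem asm_dpp_identity_of_cleared {u v y ν w P Q p q r : A}
    (hp : P * p = 1) (hq : Q * q = 1) (hr : (1 - u) * r = 1)
    (h : (1 - u * w) * (1 - v) * ((1 - ν) * Q + ν * P) =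
      (1 - (1 - ν) * v) * ((1 - u) * Q + y * u * P)) :
    (1 - u * w) * (1 - v) * ((1 - ν) * p + ν * q) =
      (1 - u) * (1 - (1 - ν) * v) * (p + r * (y * u) * q) := by
  linear_combination (p * q) * h +
    ((1 - (1 - ν) * v) * y * u * q - (1 - u * w) * (1 - v) * ν * q) * hp +
    ((1 - (1 - ν) * v) * (1 - u) * p - (1 - u * w) * (1 - v) * (1 - ν) * p) * hq -
    ((1 - (1 - ν) * v) * y * u * q) * hr

end CommRing

/-- The key relation between the ASM and DPP generating functions: if
`xν(1-ν) = ν + y(1-ν)` then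
`(1 - u/(1-ν))(1-v) f_ASM(u,v) = (1-u)(1-(1-ν)v) f_DPP(u,v)`
as formal power series in `u, v`. -/
theorem asm_dpp_generating_function_relation {K : Type*} [Field K]
    (x y ν : K) (hν : (1 : K) - ν ≠ 0)
    (hrel : x * ν * (1 - ν) = ν + y * (1 - ν)) :
    let u : MvPowerSeries (Fin 2) K := MvPowerSeries.X 0
    let v : MvPowerSeries (Fin 2) K := MvPowerSeries.X 1
    let C : K → MvPowerSeries (Fin 2) K := MvPowerSeries.C
    let fASM : MvPowerSeries (Fin 2) K :=
      C (1 - ν) * (1 - u * v)⁻¹ +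
        C ν * (1 - C x * u - v - C (y - x) * (u * v))⁻¹
    let fDPP : MvPowerSeries (Fin 2) K :=
      (1 - u * v)⁻¹ +
        (1 - u)⁻¹ * (C y * u) * (1 - C x * u - v - C (y - x) * (u * v))⁻¹
    (1 - u * C ((1 - ν)⁻¹)) * (1 - v) * fASM = (1 - u) * (1 - C (1 - ν) * v) * fDPP := by
  intro u v C fASM fDPP
  have hw : C (1 - ν)⁻¹ * C (1 - ν) = 1 := by
    rw [← map_mul, inv_mul_cancel₀ hν, map_one]
  have hrelC : C x * C ν * C (1 - ν) = C ν + C y * C (1 - ν) := by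
    simp only [C, ← map_mul, ← map_add, hrel]
  simp only [fASM, fDPP, C, map_sub, map_one] at hw hrelC ⊢
  refine asm_dpp_identity_of_cleared (MvPowerSeries.mul_inv_cancel _ ?_) (MvPowerSeries.mul_inv_cancel _ ?_)
    (MvPowerSeries.mul_inv_cancel _ ?_) (asm_dpp_cleared_identity _ _ _ _ _ _ hw hrelC) <;>
  simp [u, v]
end

section
/- Let M_t be the infinite lower bidiagonal matrix with entries (M_t)_{i+1,i} = −(i+1) and (M_t)_{i,i} = i·t for i ≥ 0 (all other entries zero). Define ℓ_t(a) = L(1/α − t, α) with α = (1 − e^{−ta})/t, where L(α',β)_{i,j} = C(i,j)(α')^j β^i. Then ℓ_t(a)·ℓ_t(a') = ℓ_t(a+a') for all a, a' (as an identity of lower triangular infinite matrices over the ring of formal power series, interpreting e^{−ta} as a formal exponential), and ℓ_t(a) = exp(−a·M_t), where the matrix exponential is well-defined entrywise since each entry of M_t^k involves only finitely many terms by triangularity. -/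
open MvPowerSeries

namespace EllProofAux

open Finset

abbrev R3 : Type := MvPowerSeries (Fin 3) ℚ

def D (d : Fin 3 →₀ ℕ) : ℕ := d 0 + d 1 + d 2

lemma D_add (d e : Fin 3 →₀ ℕ) : D (d + e) = D d + D e := by
  simp only [D, Finsupp.add_apply]; ring

lemma eq_zero_of_D {d : Fin 3 →₀ ℕ} (h : D d = 0) : d = 0 := by
  unfold D at h
  ext i
  fin_cases i <;> simp <;> omega

/-- "order at least p" in the total grading -/
def Ordo (p : ℕ) (x : R3) : Prop := ∀ d, D d < p → coeff d x = 0

lemma ordo_mono {p q : ℕ} {x : R3} (h : Ordo p x) (hqp : q ≤ p) : Ordo q x :=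
  fun d hd => h d (lt_of_lt_of_le hd hqp)

lemma ordo_zero (x : R3) : Ordo 0 x := fun _ hd => absurd hd (Nat.not_lt_zero _)

lemma ordo_zero' (p : ℕ) : Ordo p (0 : R3) := fun _ _ => map_zero _

lemma ordo_X (i : Fin 3) : Ordo 1 (X i : R3) := by
  intro d hd
  have hd0 : d = 0 := eq_zero_of_D (by omega)
  subst hd0
  rw [MvPowerSeries.coeff_X, if_neg]
  intro h
  have := DFunLike.congr_fun h i
  simp at this

lemma ordo_mul {p q : ℕ} {x y : R3} (hx : Ordo p x) (hy : Ordo q y) :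
    Ordo (p + q) (x * y) := by
  intro d hd
  rw [MvPowerSeries.coeff_mul]
  apply Finset.sum_eq_zero
  intro bd hbd
  rw [Finset.HasAntidiagonal.mem_antidiagonal] at hbd
  have hD : D bd.1 + D bd.2 = D d := by rw [← D_add, hbd]
  by_cases h1 : D bd.1 < p
  · rw [hx _ h1, zero_mul]
  · rw [hy _ (by omega), mul_zero]

lemma ordo_pow {x : R3} (hx : Ordo 1 x) (m : ℕ) : Ordo m (x ^ m) := by
  induction m with
  | zero => exact ordo_zero _
  | succ n ih =>
    rw [pow_succ]
    exact ordo_mul ih hx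

lemma ordo_C_mul {p : ℕ} {x : R3} (hx : Ordo p x) (c : ℚ) :
    Ordo p (C (σ := Fin 3) (R := ℚ) c * x) := by
  intro d hd
  rw [MvPowerSeries.coeff_C_mul, hx d hd, mul_zero]

lemma ordo_neg {p : ℕ} {x : R3} (hx : Ordo p x) : Ordo p (-x) := by
  intro d hd; rw [map_neg, hx d hd, neg_zero]

lemma ordo_sum {p : ℕ} {ι : Type*} {s : Finset ι} {f : ι → R3}
    (h : ∀ k ∈ s, Ordo p (f k)) : Ordo p (∑ k ∈ s, f k) := by
  intro d hd
  rw [map_sum]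
  exact Finset.sum_eq_zero fun k hk => h k hk d hd

/-- `f` is represented coefficientwise by the (graded) series `∑ u m`. -/
def Rep (u : ℕ → R3) (f : R3) : Prop :=
  ∀ d, coeff d f = ∑ m ∈ range (D d + 1), coeff d (u m)

lemma rep_robust {u : ℕ → R3} {f : R3} (hu : ∀ m, Ordo m (u m)) (hf : Rep u f)
    {d : Fin 3 →₀ ℕ} {N : ℕ} (hN : D d < N) :
    coeff d f = ∑ m ∈ range N, coeff d (u m) := by
  rw [hf d]
  apply Finset.sum_subset (range_subset_range.2 (by omega))
  intro m _ hnot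
  simp only [mem_range] at hnot
  exact hu m d (by omega)

lemma rep_unique {u : ℕ → R3} {f g : R3} (hf : Rep u f) (hg : Rep u g) : f = g :=
  MvPowerSeries.ext fun d => by rw [hf d, hg d]

lemma rep_sub {u v : ℕ → R3} {f g : R3} (hf : Rep u f) (hg : Rep v g) :
    Rep (fun m => u m - v m) (f - g) := by
  intro d
  simp only [map_sub, hf d, hg d, Finset.sum_sub_distrib]

lemma rep_one : Rep (fun m => if m = 0 then 1 else 0) (1 : R3) := by
  intro d
  rw [Finset.sum_eq_single_of_mem 0 (mem_range.2 (by omega))]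
  · simp
  · intro m _ hm
    simp [hm]

lemma rep_sum {ι : Type*} {s : Finset ι} {u : ι → ℕ → R3} {f : ι → R3}
    (h : ∀ k ∈ s, Rep (u k) (f k)) :
    Rep (fun m => ∑ k ∈ s, u k m) (∑ k ∈ s, f k) := by
  intro d
  rw [map_sum, Finset.sum_congr rfl (fun k hk => h k hk d), Finset.sum_comm]
  exact Finset.sum_congr rfl fun m _ => (map_sum _ _ _).symm

lemma rep_mul_left {u : ℕ → R3} {f : R3} (hu : ∀ m, Ordo m (u m)) (hf : Rep u f)
    (g : R3) : Rep (fun m => g * u m) (g * f) := by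
  intro d
  rw [MvPowerSeries.coeff_mul]
  have step : ∀ bd : (Fin 3 →₀ ℕ) × (Fin 3 →₀ ℕ), bd ∈ antidiagonal d →
      coeff bd.1 g * coeff bd.2 f
        = ∑ m ∈ range (D d + 1), coeff bd.1 g * coeff bd.2 (u m) := by
    intro bd hbd
    rw [Finset.HasAntidiagonal.mem_antidiagonal] at hbd
    have h2 : D bd.2 ≤ D d := by
      have := D_add bd.1 bd.2
      rw [hbd] at this; omega
    rw [rep_robust hu hf (show D bd.2 < D d + 1 by omega), Finset.mul_sum]
  rw [Finset.sum_congr rfl step, Finset.sum_comm]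
  exact Finset.sum_congr rfl fun m _ => (MvPowerSeries.coeff_mul _ _ _).symm

lemma rep_shift {u : ℕ → R3} {f : R3} (hu : ∀ m, Ordo (m + 1) (u m)) (hf : Rep u f) :
    Rep (fun m => if m = 0 then 0 else u (m - 1)) f := by
  intro d
  rw [Finset.sum_range_succ']
  simp only [Nat.succ_ne_zero, if_false, Nat.add_sub_cancel, if_pos rfl, map_zero, add_zero]
  rw [hf d, Finset.sum_range_succ, hu (D d) d (by omega), add_zero]
  simp

lemma sum_square_tri {M : Type*} [AddCommMonoid M] (N : ℕ) (F : ℕ → ℕ → M)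
    (hF : ∀ p q, N ≤ p + q → F p q = 0) :
    ∑ p ∈ range N, ∑ q ∈ range N, F p q
      = ∑ m ∈ range N, ∑ p ∈ range (m + 1), F p (m - p) := by
  rw [← Finset.sum_product', Finset.sum_sigma' (range N) (fun m => range (m + 1)) (fun m p => F p (m - p))]
  rw [show (∑ x ∈ range N ×ˢ range N, F x.1 x.2)
      = ∑ x ∈ (range N ×ˢ range N).filter (fun x => x.1 + x.2 < N), F x.1 x.2 from
    (Finset.sum_subset (filter_subset _ _) (by
      intro x hx hxn
      simp only [mem_filter, hx, true_and, not_lt] at hxn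
      exact hF _ _ hxn)).symm]
  refine Finset.sum_nbij' (fun x => (⟨x.1 + x.2, x.1⟩ : (_ : ℕ) × ℕ))
      (fun x => (x.2, x.1 - x.2)) ?_ ?_ ?_ ?_ ?_
  · intro x hx
    simp only [mem_filter, mem_product, mem_range] at hx
    simp only [mem_sigma, mem_range]
    omega
  · intro x hx
    simp only [mem_sigma, mem_range] at hx
    simp only [mem_filter, mem_product, mem_range]
    omega
  · intro x hx
    simp only [mem_filter, mem_product, mem_range] at hx
    ext <;> simp
  · rintro ⟨m, p⟩ hx
    simp only [mem_sigma, mem_range] at hx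
    have h : p + (m - p) = m := by omega
    simp [h]
  · intro x hx
    simp only [mem_filter, mem_product, mem_range] at hx
    simp only []
    congr 1
    omega

lemma rep_mul {u v : ℕ → R3} {f g : R3} (hu : ∀ m, Ordo m (u m)) (hv : ∀ m, Ordo m (v m))
    (hf : Rep u f) (hg : Rep v g) :
    Rep (fun m => ∑ p ∈ range (m + 1), u p * v (m - p)) (f * g) := by
  intro d
  rw [MvPowerSeries.coeff_mul]
  have step : ∀ bd : (Fin 3 →₀ ℕ) × (Fin 3 →₀ ℕ), bd ∈ antidiagonal d →
      coeff bd.1 f * coeff bd.2 g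
        = ∑ p ∈ range (D d + 1), ∑ q ∈ range (D d + 1),
            coeff bd.1 (u p) * coeff bd.2 (v q) := by
    intro bd hbd
    rw [Finset.HasAntidiagonal.mem_antidiagonal] at hbd
    have hD : D bd.1 + D bd.2 = D d := by rw [← D_add, hbd]
    rw [rep_robust hu hf (show D bd.1 < D d + 1 by omega),
      rep_robust hv hg (show D bd.2 < D d + 1 by omega), Finset.sum_mul_sum]
  rw [Finset.sum_congr rfl step, Finset.sum_comm]
  have swap2 : ∀ p ∈ range (D d + 1),
      (∑ bd ∈ antidiagonal d, ∑ q ∈ range (D d + 1),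
        coeff bd.1 (u p) * coeff bd.2 (v q))
      = ∑ q ∈ range (D d + 1), coeff d (u p * v q) := by
    intro p _
    rw [Finset.sum_comm]
    exact Finset.sum_congr rfl fun q _ => (MvPowerSeries.coeff_mul _ _ _).symm
  rw [Finset.sum_congr rfl swap2]
  rw [sum_square_tri (D d + 1) (fun p q => coeff d (u p * v q))
    (fun p q hpq => ordo_mul (hu p) (hv q) d (by omega))]
  exact Finset.sum_congr rfl fun m _ => (map_sum _ _ _).symm

/-- formal exponential, defined coefficientwise with exact truncation -/
noncomputable def ExpS (x : R3) : R3 :=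
  (fun d => ∑ m ∈ range (D d + 1), (1 / (m.factorial : ℚ)) * coeff d (x ^ m) : R3)

lemma rep_Exp (x : R3) :
    Rep (fun m => C (σ := Fin 3) (R := ℚ) (1 / (m.factorial : ℚ)) * x ^ m) (ExpS x) := by
  intro d
  rw [MvPowerSeries.coeff_apply]
  exact Finset.sum_congr rfl fun m _ => (MvPowerSeries.coeff_C_mul _ _ _).symm

lemma ordo_ExpSeq {x : R3} (hx : Ordo 1 x) (m : ℕ) :
    Ordo m (C (σ := Fin 3) (R := ℚ) (1 / (m.factorial : ℚ)) * x ^ m) :=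
  ordo_C_mul (ordo_pow hx m) _

lemma ExpS_zero : ExpS 0 = 1 := by
  apply MvPowerSeries.ext
  intro d
  rw [MvPowerSeries.coeff_apply]
  show (∑ m ∈ range (D d + 1), (1 / (m.factorial : ℚ)) * coeff d ((0 : R3) ^ m)) = _
  rw [Finset.sum_eq_single_of_mem 0 (mem_range.2 (by omega))]
  · simp
  · intro m _ hm
    rw [zero_pow hm]
    simp

lemma ExpS_add {x y : R3} (hx : Ordo 1 x) (hy : Ordo 1 y) :
    ExpS x * ExpS y = ExpS (x + y) := by
  have hxy : Ordo 1 (x + y) := by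
    intro d hd
    rw [map_add, hx d hd, hy d hd, add_zero]
  have hseq : ∀ m, (C (σ := Fin 3) (R := ℚ) (1 / (m.factorial : ℚ)) * (x + y) ^ m)
      = ∑ p ∈ range (m + 1),
          (C (σ := Fin 3) (R := ℚ) (1 / (p.factorial : ℚ)) * x ^ p)
            * (C (σ := Fin 3) (R := ℚ) (1 / ((m - p).factorial : ℚ)) * y ^ (m - p)) := by
    intro m
    rw [add_pow, Finset.mul_sum]
    apply Finset.sum_congr rfl
    intro p hp
    rw [mem_range] at hp
    have hpm : p ≤ m := by omega
    have hfac : (1 / (p.factorial : ℚ)) * (1 / ((m - p).factorial : ℚ))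
        = (1 / (m.factorial : ℚ)) * (m.choose p : ℚ) := by
      have h := Nat.choose_mul_factorial_mul_factorial hpm
      have h1 : (p.factorial : ℚ) ≠ 0 := Nat.cast_ne_zero.2 p.factorial_ne_zero
      have h2 : ((m - p).factorial : ℚ) ≠ 0 := Nat.cast_ne_zero.2 (m - p).factorial_ne_zero
      have h3 : (m.factorial : ℚ) ≠ 0 := Nat.cast_ne_zero.2 m.factorial_ne_zero
      field_simp
      have := congrArg (fun n : ℕ => (n : ℚ)) h
      push_cast at this
      linarith [this]
    calc C (σ := Fin 3) (R := ℚ) (1 / (m.factorial : ℚ)) * (x ^ p * y ^ (m - p) * (m.choose p : R3))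
        = (C (σ := Fin 3) (R := ℚ) (1 / (m.factorial : ℚ)) * C (σ := Fin 3) (R := ℚ) (m.choose p : ℚ))
            * (x ^ p * y ^ (m - p)) := by
          rw [map_natCast (C (σ := Fin 3) (R := ℚ)) (m.choose p)]; ring
      _ = (C (σ := Fin 3) (R := ℚ) (1 / (p.factorial : ℚ)) * C (σ := Fin 3) (R := ℚ) (1 / ((m - p).factorial : ℚ)))
            * (x ^ p * y ^ (m - p)) := by
          rw [← map_mul, ← map_mul, ← hfac]
      _ = _ := by ring
  have h1 : Rep (fun m => C (σ := Fin 3) (R := ℚ) (1 / (m.factorial : ℚ)) * (x + y) ^ m)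
      (ExpS x * ExpS y) := by
    have := rep_mul (ordo_ExpSeq hx) (ordo_ExpSeq hy) (rep_Exp x) (rep_Exp y)
    intro d
    rw [this d]
    exact Finset.sum_congr rfl fun m _ => congrArg (coeff d) (hseq m).symm
  exact rep_unique h1 (rep_Exp (x + y))

lemma ordo_natCast_mul {x : R3} (hx : Ordo 1 x) (k : ℕ) : Ordo 1 ((k : R3) * x) := by
  rw [← map_natCast (C (σ := Fin 3) (R := ℚ)) k]
  exact ordo_C_mul hx _

lemma ExpS_pow {x : R3} (hx : Ordo 1 x) (k : ℕ) : ExpS x ^ k = ExpS ((k : R3) * x) := by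
  induction k with
  | zero => simp [ExpS_zero]
  | succ n ih =>
    rw [pow_succ, ih, ExpS_add (ordo_natCast_mul hx n) hx,
      show ((n : R3) * x + x) = ((n + 1 : ℕ) : R3) * x by push_cast; ring]

lemma X_ne_zero' (i : Fin 3) : (X i : R3) ≠ 0 := by
  intro h
  have := congrArg (coeff (Finsupp.single i 1)) h
  rw [MvPowerSeries.coeff_X, if_pos rfl, map_zero] at this
  exact one_ne_zero this

lemma X_pow_cancel (p : ℕ) {f g : R3} (h : (X 0 : R3) ^ p * f = (X 0 : R3) ^ p * g) :
    f = g :=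
  mul_left_cancel₀ (pow_ne_zero p (X_ne_zero' 0)) h

/-- `α(s)` defined coefficientwise -/
noncomputable def alphA (s : R3) : R3 :=
  (fun d => ∑ m ∈ range (D d + 1),
    ((-1) ^ m / ((m + 1).factorial : ℚ)) *
      coeff d ((X 0 : R3) ^ m * s ^ (m + 1)) : R3)

lemma rep_alph (s : R3) :
    Rep (fun m => C (σ := Fin 3) (R := ℚ) ((-1) ^ m / ((m + 1).factorial : ℚ))
        * ((X 0 : R3) ^ m * s ^ (m + 1)))
      (alphA s) := by
  intro d
  rw [MvPowerSeries.coeff_apply]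
  exact Finset.sum_congr rfl fun m _ => (MvPowerSeries.coeff_C_mul _ _ _).symm

lemma ordo_alphSeq {s : R3} (hs : Ordo 1 s) (m : ℕ) :
    Ordo (m + 1) (C (σ := Fin 3) (R := ℚ) ((-1) ^ m / ((m + 1).factorial : ℚ))
      * ((X 0 : R3) ^ m * s ^ (m + 1))) := by
  apply ordo_C_mul
  exact ordo_mono (ordo_mul (ordo_zero ((X 0 : R3) ^ m)) (ordo_pow hs (m + 1))) (by omega)

lemma alph_eq {s : R3} (hs : Ordo 1 s) :
    (X 0 : R3) * alphA s = 1 - ExpS (-(X 0 * s)) := by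
  set u : ℕ → R3 := fun m =>
    C (σ := Fin 3) (R := ℚ) ((-1) ^ m / ((m + 1).factorial : ℚ))
      * ((X 0 : R3) ^ m * s ^ (m + 1)) with hu
  have hOrdu : ∀ m, Ordo m (u m) := fun m => ordo_mono (ordo_alphSeq hs m) (by omega)
  have hOrdu1 : ∀ m, Ordo (m + 1) ((X 0 : R3) * u m) := fun m =>
    ordo_mono (ordo_mul (ordo_X 0) (hOrdu m)) (by omega)
  have h2 : Rep (fun m => if m = 0 then 0 else (X 0 : R3) * u (m - 1))
      ((X 0 : R3) * alphA s) :=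
    rep_shift hOrdu1 (rep_mul_left hOrdu (rep_alph s) _)
  have h3 : Rep (fun m => (if m = 0 then (1 : R3) else 0)
        - C (σ := Fin 3) (R := ℚ) (1 / (m.factorial : ℚ)) * (-(X 0 * s)) ^ m)
      (1 - ExpS (-(X 0 * s))) := rep_sub rep_one (rep_Exp _)
  have heq : ∀ m, ((if m = 0 then (1 : R3) else 0)
        - C (σ := Fin 3) (R := ℚ) (1 / (m.factorial : ℚ)) * (-(X 0 * s)) ^ m)
      = (if m = 0 then 0 else (X 0 : R3) * u (m - 1)) := by
    intro m
    cases m with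
    | zero => simp
    | succ n =>
      simp only [Nat.succ_ne_zero, if_false, Nat.add_sub_cancel, hu, zero_sub]
      rw [neg_pow]
      simp only [div_eq_mul_inv, one_mul, map_mul, map_pow, map_neg, map_one]
      ring
  have h3' : Rep (fun m => if m = 0 then 0 else (X 0 : R3) * u (m - 1))
      (1 - ExpS (-(X 0 * s))) := by
    intro d
    rw [h3 d]
    exact Finset.sum_congr rfl fun m _ => congrArg (coeff d) (heq m)
  exact rep_unique h2 h3'

/-- entries of `M_t` -/
noncomputable def MtA (i j : ℕ) : R3 :=
  if i = j then (i : R3) * X 0 else if i = j + 1 then -(i : R3) else 0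

noncomputable def MtpowA (n : ℕ) : ℕ → ℕ → R3 :=
  Nat.rec (fun i j => if i = j then 1 else 0)
    (fun _ P i j => ∑ k ∈ Finset.range (i + 1), MtA i k * P k j) n

lemma MtpowA_zero (i j : ℕ) : MtpowA 0 i j = if i = j then 1 else 0 := rfl

lemma MtpowA_succ (n i j : ℕ) :
    MtpowA (n + 1) i j = ∑ k ∈ range (i + 1), MtA i k * MtpowA n k j := rfl

lemma MtpowA_succ' (n i j : ℕ) :
    MtpowA (n + 1) i j
      = (i : R3) * X 0 * MtpowA n i j - (i : R3) * MtpowA n (i - 1) j := by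
  rw [MtpowA_succ]
  cases i with
  | zero => simp [MtA]
  | succ i =>
    rw [Finset.sum_range_succ, Finset.sum_range_succ]
    have hz : ∑ x ∈ range i, MtA (i + 1) x * MtpowA n x j = 0 := by
      apply Finset.sum_eq_zero
      intro k hk
      rw [mem_range] at hk
      rw [show MtA (i + 1) k = 0 from by
        unfold MtA; rw [if_neg (by omega), if_neg (by omega)], zero_mul]
    rw [hz]
    rw [show MtA (i + 1) i = -((i + 1 : ℕ) : R3) from by
      unfold MtA; rw [if_neg (by omega), if_pos rfl]]
    rw [show MtA (i + 1) (i + 1) = ((i + 1 : ℕ) : R3) * X 0 from by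
      unfold MtA; rw [if_pos rfl]]
    rw [show (i + 1) - 1 = i from rfl]
    ring

lemma MtpowA_lt (n : ℕ) : ∀ i j : ℕ, i < j → MtpowA n i j = 0 := by
  induction n with
  | zero => intro i j h; rw [MtpowA_zero, if_neg (by omega)]
  | succ n ih =>
    intro i j h
    rw [MtpowA_succ', ih i j h, ih (i - 1) j (by omega)]
    simp

lemma choose_mul' (n k j : ℕ) (h : j ≤ k) :
    n.choose j * ((n - j).choose (k - j)) = n.choose k * k.choose j := by
  rcases le_or_gt k n with hkn | hnk
  · exact (Nat.choose_mul h).symm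
  · rw [Nat.choose_eq_zero_of_lt hnk, zero_mul]
    rcases le_or_gt j n with hjn | hnj
    · rw [Nat.choose_eq_zero_of_lt (by omega : n - j < k - j), mul_zero]
    · rw [Nat.choose_eq_zero_of_lt hnj, zero_mul]

lemma choose_core_q (i k : ℕ) (hi : 1 ≤ i) :
    (k : ℚ) * (i.choose k : ℚ) + (i : ℚ) * ((i - 1).choose k : ℚ)
      = (i : ℚ) * (i.choose k : ℚ) := by
  obtain ⟨s, rfl⟩ : ∃ s, i = s + 1 := ⟨i - 1, by omega⟩
  simp only [Nat.add_sub_cancel]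
  cases k with
  | zero => simp
  | succ r =>
    have h1 : ((s : ℚ) + 1) * (s.choose r : ℚ)
        = ((s + 1).choose (r + 1) : ℚ) * ((r : ℚ) + 1) := by
      have := Nat.add_one_mul_choose_eq s r
      have h := congrArg (fun n : ℕ => (n : ℚ)) this
      push_cast at h
      linarith [h]
    have h2 : ((s + 1).choose (r + 1) : ℚ) = (s.choose r : ℚ) + (s.choose (r + 1) : ℚ) := by
      have := Nat.choose_succ_succ s r
      have h := congrArg (fun n : ℕ => (n : ℚ)) this
      push_cast at h
      linarith [h]
    push_cast
    linear_combination (-1 : ℚ) * h1 - ((s : ℚ) + 1) * h2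

lemma key_q (i j r : ℕ) (h : j < i) :
    ((j + r : ℕ) : ℚ) * ((i.choose j : ℚ) * (((i - j).choose r : ℚ)))
        + (i : ℚ) * (((i - 1).choose j : ℚ) * (((i - 1 - j).choose r : ℚ)))
      = (i : ℚ) * ((i.choose j : ℚ) * (((i - j).choose r : ℚ))) := by
  have e1 : i.choose j * ((i - j).choose r) = i.choose (j + r) * (j + r).choose j := by
    have := choose_mul' i (j + r) j (by omega)
    rwa [Nat.add_sub_cancel_left] at this
  have e2 : (i - 1).choose j * ((i - 1 - j).choose r)
      = (i - 1).choose (j + r) * (j + r).choose j := by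
    have := choose_mul' (i - 1) (j + r) j (by omega)
    rwa [Nat.add_sub_cancel_left] at this
  have e1q := congrArg (fun n : ℕ => (n : ℚ)) e1
  have e2q := congrArg (fun n : ℕ => (n : ℚ)) e2
  have hc := choose_core_q i (j + r) (by omega)
  push_cast at e1q e2q hc ⊢
  linear_combination ((j + r).choose j : ℚ) * hc + ((j : ℚ) + r) * e1q
    + (i : ℚ) * e2q - (i : ℚ) * e1q

/-- the scalar `Q` polynomial -/
def Qc (m i j : ℕ) : ℚ :=
  ∑ r ∈ range (i - j + 1),
    (-1 : ℚ) ^ r * (i.choose j : ℚ) * ((i - j).choose r : ℚ) * ((j + r : ℕ) : ℚ) ^ m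

lemma Qc_lt (m i j : ℕ) (h : i < j) : Qc m i j = 0 := by
  unfold Qc
  apply Finset.sum_eq_zero
  intro r _
  rw [Nat.choose_eq_zero_of_lt h]
  push_cast
  ring

lemma Qc_diag (m i : ℕ) : Qc m i i = (i : ℚ) ^ m := by
  unfold Qc
  simp

lemma alt_sum_q (n : ℕ) (hn : n ≠ 0) :
    ∑ r ∈ range (n + 1), (-1 : ℚ) ^ r * (n.choose r : ℚ) = 0 := by
  have h := Int.alternating_sum_range_choose (n := n)
  rw [if_neg hn] at h
  have h2 := congrArg (fun z : ℤ => (z : ℚ)) h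
  push_cast at h2
  convert h2 using 1

lemma Qc_zero_of_ne (i j : ℕ) (h : i ≠ j) : Qc 0 i j = 0 := by
  rcases lt_or_gt_of_ne h with hlt | hgt
  · exact Qc_lt 0 i j hlt
  · unfold Qc
    have : ∀ r ∈ range (i - j + 1),
        (-1 : ℚ) ^ r * (i.choose j : ℚ) * ((i - j).choose r : ℚ) * ((j + r : ℕ) : ℚ) ^ 0
          = (i.choose j : ℚ) * ((-1 : ℚ) ^ r * ((i - j).choose r : ℚ)) := by
      intro r _
      rw [pow_zero]
      ring
    rw [Finset.sum_congr rfl this, ← Finset.mul_sum, alt_sum_q (i - j) (by omega), mul_zero]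

lemma Qc_succ (m i j : ℕ) (h : j < i) :
    Qc (m + 1) i j = (i : ℚ) * Qc m i j - (i : ℚ) * Qc m (i - 1) j := by
  have hmid : Qc m (i - 1) j = ∑ r ∈ range (i - j + 1),
      (-1 : ℚ) ^ r * ((i - 1).choose j : ℚ) * ((i - 1 - j).choose r : ℚ)
        * ((j + r : ℕ) : ℚ) ^ m := by
    rw [show i - j + 1 = (i - 1 - j + 1) + 1 from by omega, Finset.sum_range_succ]
    rw [show i - 1 - j + 1 = i - j from by omega,
      Nat.choose_eq_zero_of_lt (show i - 1 - j < i - j from by omega)]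
    unfold Qc
    simp only [neg_zero, zero_mul, mul_zero, Nat.cast_zero, add_zero]
    exact Finset.sum_congr (by congr 1; omega) fun _ _ => rfl
  rw [hmid]
  unfold Qc
  rw [Finset.mul_sum, Finset.mul_sum, ← Finset.sum_sub_distrib]
  apply Finset.sum_congr rfl
  intro r _
  have hk := key_q i j r h
  rw [pow_succ]
  linear_combination ((-1 : ℚ) ^ r * ((j + r : ℕ) : ℚ) ^ m) * hk

lemma MtpowA_mul (m : ℕ) : ∀ i j : ℕ,
    MtpowA m i j * (X 0 : R3) ^ (i - j) = C (σ := Fin 3) (R := ℚ) (Qc m i j) * (X 0 : R3) ^ m := by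
  induction m with
  | zero =>
    intro i j
    by_cases h : i = j
    · subst h
      rw [MtpowA_zero, if_pos rfl, Qc_diag]
      simp [Nat.sub_self]
    · rw [MtpowA_zero, if_neg h, Qc_zero_of_ne i j h]
      simp
  | succ m ih =>
    intro i j
    rcases lt_trichotomy i j with hij | hij | hij
    · rw [MtpowA_lt _ _ _ hij, Qc_lt _ _ _ hij]
      simp
    · subst hij
      rw [MtpowA_succ']
      have hz : (i : R3) * MtpowA m (i - 1) i = 0 := by
        cases i with
        | zero => simp
        | succ s =>
          rw [show s + 1 - 1 = s from rfl, MtpowA_lt m s (s + 1) (by omega), mul_zero]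
      rw [hz, sub_zero, Nat.sub_self, pow_zero, mul_one]
      have hii := ih i i
      rw [Nat.sub_self, pow_zero, mul_one] at hii
      rw [hii, Qc_diag, Qc_diag, ← map_natCast (C (σ := Fin 3) (R := ℚ)) i]
      simp only [map_pow]
      ring
    · rw [MtpowA_succ', sub_mul]
      have h1 := ih i j
      have hsplit : (X 0 : R3) ^ (i - j) = X 0 ^ (i - 1 - j) * X 0 := by
        rw [← pow_succ]
        congr 1
        omega
      have h2 : MtpowA m (i - 1) j * (X 0 : R3) ^ (i - j)
          = C (σ := Fin 3) (R := ℚ) (Qc m (i - 1) j) * X 0 ^ m * X 0 := by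
        rw [hsplit, ← mul_assoc, ih (i - 1) j]
      calc ((i : R3) * X 0 * MtpowA m i j) * X 0 ^ (i - j)
            - ((i : R3) * MtpowA m (i - 1) j) * X 0 ^ (i - j)
          = (i : R3) * X 0 * (MtpowA m i j * X 0 ^ (i - j))
            - (i : R3) * (MtpowA m (i - 1) j * X 0 ^ (i - j)) := by ring
        _ = (i : R3) * X 0 * (C (σ := Fin 3) (R := ℚ) (Qc m i j) * X 0 ^ m)
            - (i : R3) * (C (σ := Fin 3) (R := ℚ) (Qc m (i - 1) j) * X 0 ^ m * X 0) := by rw [h1, h2]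
        _ = C (σ := Fin 3) (R := ℚ) (Qc (m + 1) i j) * X 0 ^ (m + 1) := by
            rw [Qc_succ m i j hij, map_sub, map_mul, map_mul, map_natCast, pow_succ]
            ring

/-- entries of `exp(-a M_t)` defined coefficientwise -/
noncomputable def expEntryA (i j : ℕ) : R3 :=
  (fun d => ∑ m ∈ range (D d + 1),
    ((-1) ^ m / (m.factorial : ℚ)) *
      coeff d ((X 1 : R3) ^ m * MtpowA m i j) : R3)

lemma rep_expEntry (i j : ℕ) :
    Rep (fun m => C (σ := Fin 3) (R := ℚ) ((-1) ^ m / (m.factorial : ℚ))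
        * ((X 1 : R3) ^ m * MtpowA m i j))
      (expEntryA i j) := by
  intro d
  rw [MvPowerSeries.coeff_apply]
  exact Finset.sum_congr rfl fun m _ => (MvPowerSeries.coeff_C_mul _ _ _).symm

lemma texp (i j : ℕ) :
    (X 0 : R3) ^ (i - j) * expEntryA i j
      = ∑ r ∈ range (i - j + 1),
          C (σ := Fin 3) (R := ℚ) ((-1 : ℚ) ^ r * (i.choose j : ℚ) * ((i - j).choose r : ℚ))
            * ExpS (-(((j + r : ℕ) : R3) * (X 0 * X 1))) := by
  set u : ℕ → R3 := fun m =>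
    C (σ := Fin 3) (R := ℚ) ((-1) ^ m / (m.factorial : ℚ)) * ((X 1 : R3) ^ m * MtpowA m i j) with hu
  have hOrdu : ∀ m, Ordo m (u m) := fun m =>
    ordo_C_mul (ordo_mono (ordo_mul (ordo_pow (ordo_X 1) m) (ordo_zero _)) (by omega)) _
  have hL : Rep (fun m => (X 0 : R3) ^ (i - j) * u m)
      ((X 0 : R3) ^ (i - j) * expEntryA i j) :=
    rep_mul_left hOrdu (rep_expEntry i j) _
  set v : ℕ → R3 := fun m => ∑ r ∈ range (i - j + 1),
      C (σ := Fin 3) (R := ℚ) ((-1 : ℚ) ^ r * (i.choose j : ℚ) * ((i - j).choose r : ℚ))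
        * (C (σ := Fin 3) (R := ℚ) (1 / (m.factorial : ℚ))
            * (-(((j + r : ℕ) : R3) * (X 0 * X 1))) ^ m) with hv
  have hordArg : ∀ r : ℕ, Ordo 1 (-((r : R3) * ((X 0 : R3) * X 1))) := fun r =>
    ordo_neg (ordo_natCast_mul (ordo_mono (ordo_mul (ordo_X 0) (ordo_X 1)) (by omega)) r)
  have hR : Rep v (∑ r ∈ range (i - j + 1),
      C (σ := Fin 3) (R := ℚ) ((-1 : ℚ) ^ r * (i.choose j : ℚ) * ((i - j).choose r : ℚ))
        * ExpS (-(((j + r : ℕ) : R3) * (X 0 * X 1)))) :=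
    rep_sum fun r _ => rep_mul_left (ordo_ExpSeq (hordArg (j + r))) (rep_Exp _) _
  have hequ : ∀ m, (X 0 : R3) ^ (i - j) * u m = v m := by
    intro m
    have h1 : (X 0 : R3) ^ (i - j) * u m
        = C (σ := Fin 3) (R := ℚ) ((-1) ^ m / (m.factorial : ℚ))
            * ((X 1 : R3) ^ m * (C (σ := Fin 3) (R := ℚ) (Qc m i j) * X 0 ^ m)) := by
      rw [hu, ← MtpowA_mul m i j]; ring
    rw [h1, hv]
    unfold Qc
    rw [map_sum, Finset.sum_mul, Finset.mul_sum, Finset.mul_sum]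
    apply Finset.sum_congr rfl
    intro r _
    rw [neg_pow]
    simp only [div_eq_mul_inv, one_mul, map_mul, map_pow, map_neg, map_one, map_natCast]
    ring
  have hL' : Rep v ((X 0 : R3) ^ (i - j) * expEntryA i j) := by
    intro d
    rw [hL d]
    exact Finset.sum_congr rfl fun m _ => congrArg (coeff d) (hequ m)
  exact rep_unique hL' hR

/-- the matrix `ℓ_t(s)` -/
noncomputable def ellA (s : R3) (i j : ℕ) : R3 :=
  (i.choose j : R3) * (1 - X 0 * alphA s) ^ j * (alphA s) ^ (i - j)

lemma ordo_Xmul (a b : Fin 3) : Ordo 1 (-((X a : R3) * X b)) :=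
  ordo_neg (ordo_mono (ordo_mul (ordo_X a) (ordo_X b)) (by omega))

lemma part2 (i j : ℕ) : ellA (X 1) i j = expEntryA i j := by
  apply X_pow_cancel (i - j)
  rw [texp i j]
  set E : R3 := ExpS (-(X 0 * X 1)) with hE
  have h1 : (X 0 : R3) * alphA (X 1) = 1 - E := alph_eq (ordo_X 1)
  have h1' : (1 : R3) - X 0 * alphA (X 1) = E := by linear_combination -h1
  have hpow : ∀ k : ℕ, E ^ k = ExpS (-((k : R3) * (X 0 * X 1))) := by
    intro k
    rw [hE, ExpS_pow (ordo_Xmul 0 1) k]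
    exact congrArg ExpS (by ring)
  have step1 : (X 0 : R3) ^ (i - j) * ellA (X 1) i j
      = (i.choose j : R3) * E ^ j * ((X 0 * alphA (X 1)) ^ (i - j)) := by
    unfold ellA
    rw [h1', mul_pow]
    ring
  rw [step1, h1]
  have hbin : ((1 : R3) - E) ^ (i - j)
      = ∑ r ∈ range ((i - j) + 1), (-E) ^ r * 1 ^ ((i - j) - r) * ((i - j).choose r : R3) := by
    rw [show (1 : R3) - E = -E + 1 from by ring, add_pow]
  rw [hbin, Finset.mul_sum]
  apply Finset.sum_congr rfl
  intro r _
  rw [← hpow (j + r), one_pow, neg_pow, pow_add E j r]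
  simp only [map_mul, map_pow, map_neg, map_one, map_natCast]
  ring

lemma part1 (i j : ℕ) :
    (∑ k ∈ range (i + 1), ellA (X 1) i k * ellA (X 2) k j) = ellA (X 1 + X 2) i j := by
  have hOa : Ordo 1 (X 1 : R3) := ordo_X 1
  have hOb : Ordo 1 (X 2 : R3) := ordo_X 2
  have hOab : Ordo 1 ((X 1 : R3) + X 2) := fun d hd => by
    rw [map_add, hOa d hd, hOb d hd, add_zero]
  set Ea : R3 := ExpS (-(X 0 * X 1)) with hEa
  set Eb : R3 := ExpS (-(X 0 * X 2)) with hEb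
  set aa : R3 := alphA (X 1) with haa
  set ab : R3 := alphA (X 2) with hab
  set ac : R3 := alphA (X 1 + X 2) with hac
  have h1 : (X 0 : R3) * aa = 1 - Ea := alph_eq hOa
  have h2 : (X 0 : R3) * ab = 1 - Eb := alph_eq hOb
  have h3 : (X 0 : R3) * ac = 1 - Ea * Eb := by
    rw [hac, alph_eq hOab,
      show (-(X 0 * ((X 1 : R3) + X 2))) = (-(X 0 * X 1)) + (-(X 0 * X 2)) from by ring,
      ← ExpS_add (ordo_Xmul 0 1) (ordo_Xmul 0 2)]
  have h1' : (1 : R3) - X 0 * aa = Ea := by linear_combination -h1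
  have h2' : (1 : R3) - X 0 * ab = Eb := by linear_combination -h2
  have h3' : (1 : R3) - X 0 * ac = Ea * Eb := by linear_combination -h3
  have h4 : ac = aa + Ea * ab := by
    apply X_pow_cancel 1
    rw [pow_one]
    linear_combination h3 - h1 - Ea * h2
  rcases le_or_gt j i with hij | hij
  · -- j ≤ i
    have hLterm : ∀ k, ellA (X 1) i k * ellA (X 2) k j
        = ((i.choose k : R3) * Ea ^ k * aa ^ (i - k))
          * ((k.choose j : R3) * Eb ^ j * ab ^ (k - j)) := by
      intro k
      unfold ellA
      rw [← haa, ← hab, h1', h2']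
    have hRHS : ellA (X 1 + X 2) i j
        = ∑ m ∈ range ((i - j) + 1),
            (i.choose j : R3) * ((Ea ^ j * Eb ^ j)
              * ((Ea * ab) ^ m * aa ^ ((i - j) - m) * ((i - j).choose m : R3))) := by
      unfold ellA
      rw [← hac, h3', h4, show aa + Ea * ab = Ea * ab + aa from by ring, add_pow,
        Finset.mul_sum, mul_pow]
      apply Finset.sum_congr rfl
      intro m _
      ring
    rw [hRHS]
    rw [Finset.sum_congr rfl (fun k _ => hLterm k)]
    rw [← Finset.sum_subset
      (show Ico j (i + 1) ⊆ range (i + 1) from fun k hk => by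
        rw [mem_Ico] at hk; rw [mem_range]; omega)
      (fun k hk hk2 => by
        rw [mem_range] at hk
        rw [mem_Ico] at hk2
        rw [Nat.choose_eq_zero_of_lt (show k < j from by omega)]
        push_cast
        ring)]
    rw [Finset.sum_Ico_eq_sum_range, show i + 1 - j = (i - j) + 1 from by omega]
    apply Finset.sum_congr rfl
    intro m hm
    rw [mem_range] at hm
    rw [Nat.add_sub_cancel_left, show i - (j + m) = (i - j) - m from by omega, pow_add]
    have hch : i.choose (j + m) * (j + m).choose j = i.choose j * ((i - j).choose m) := by
      have := choose_mul' i (j + m) j (by omega)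
      rw [Nat.add_sub_cancel_left] at this
      exact this.symm
    have hchR := congrArg (fun n : ℕ => (n : R3)) hch
    push_cast at hchR
    linear_combination (Ea ^ j * Ea ^ m * Eb ^ j * aa ^ ((i - j) - m) * ab ^ m) * hchR
  · -- i < j
    rw [Finset.sum_eq_zero (fun k hk => by
      rw [mem_range] at hk
      unfold ellA
      rw [Nat.choose_eq_zero_of_lt (show k < j from by omega)]
      push_cast
      ring)]
    unfold ellA
    rw [Nat.choose_eq_zero_of_lt hij]
    push_cast
    ring

end EllProofAux


/-- Over `ℚ[[t,a,a']]` (here `MvPowerSeries (Fin 3) ℚ` with `t = X 0`, `a = X 1`,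
`a' = X 2`), let `α(s) = (1-e^{-ts})/t = Σ_{m≥0} (-1)^m t^m s^{m+1}/(m+1)!` and
`ℓ_t(s) = L(1/α(s) - t, α(s))`, i.e. `ℓ_t(s)_{i,j} = C(i,j)(1-tα(s))^j α(s)^{i-j}`
(zero for `j > i`). Then `ℓ_t(a)·ℓ_t(a') = ℓ_t(a+a')`, and `ℓ_t(a) = exp(-a·M_t)`
where `M_t` is the lower bidiagonal matrix with `(M_t)_{i,i} = i·t`,
`(M_t)_{i+1,i} = -(i+1)`; all infinite sums are exact finite truncations by
triangularity and formal convergence in the grading. -/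
theorem ell_addition_and_exp :
    let R := MvPowerSeries (Fin 3) ℚ
    let t : R := MvPowerSeries.X 0
    let a : R := MvPowerSeries.X 1
    let a' : R := MvPowerSeries.X 2
    let deg : (Fin 3 →₀ ℕ) → ℕ := fun d => d 0 + d 1 + d 2
    -- α(s) = (1 - e^{-ts})/t, defined coefficientwise by its (exactly truncated) series
    let alphOf : R → R := fun s =>
      (fun d => ∑ m ∈ Finset.range (deg d + 1),
        ((-1) ^ m / ((m + 1).factorial : ℚ)) *
          MvPowerSeries.coeff d (t ^ m * s ^ (m + 1)) : R)
    let ell : R → ℕ → ℕ → R := fun s i j =>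
      (i.choose j : R) * (1 - t * alphOf s) ^ j * (alphOf s) ^ (i - j)
    let Mt : ℕ → ℕ → R := fun i j =>
      if i = j then (i : R) * t else if i = j + 1 then -(i : R) else 0
    let Mtpow : ℕ → ℕ → ℕ → R := fun n =>
      Nat.rec (fun i j => if i = j then 1 else 0)
        (fun _ P i j => ∑ k ∈ Finset.range (i + 1), Mt i k * P k j) n
    -- exp(-a·M_t), defined entrywise by its (exactly truncated) exponential series
    let expEntry : ℕ → ℕ → R := fun i j =>
      (fun d => ∑ m ∈ Finset.range (deg d + 1),
        ((-1) ^ m / (m.factorial : ℚ)) *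
          MvPowerSeries.coeff d (a ^ m * Mtpow m i j) : R)
    (∀ i j : ℕ,
      (∑ k ∈ Finset.range (i + 1), ell a i k * ell a' k j) = ell (a + a') i j) ∧
    (∀ i j : ℕ, ell a i j = expEntry i j) := by
  intro R t a a' deg alphOf ell Mt Mtpow expEntry
  constructor
  · intro i j
    show (∑ k ∈ Finset.range (i + 1),
        EllProofAux.ellA (X 1) i k * EllProofAux.ellA (X 2) k j)
      = EllProofAux.ellA (X 1 + X 2) i j
    exact EllProofAux.part1 i j
  · intro i j
    show EllProofAux.ellA (X 1) i j = EllProofAux.expEntryA i j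
    exact EllProofAux.part2 i j
end
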